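/- arXiv:math/0609293 — 2 statements merged into one kernel-verified Lean document; each statement's English description precedes it below -/
import Mathlib

section
/- A finitely generated monoid M is finite if and only if its loop problem L_σ(M) with respect to some (equivalently, any) finite choice of generators σ : X* → M is a regular language. -/
open FreeMonoid

section LoopPrelude

variable {X M : Type*} [Monoid M]

def barW {X : Type*} (w : List (X ⊕ X)) : List (X ⊕ X) := (w.map Sum.swap).reverse

def posW {X : Type*} (u : List X) : List (X ⊕ X) := u.map Sum.inl

def negW {X : Type*} (v : List X) : List (X ⊕ X) := (v.map Sum.inr).reverse

inductive LStep (σ : FreeMonoid X →* M) : M → (X ⊕ X) → M → Prop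
  | posW (a : M) (x : X) : LStep σ a (Sum.inl x) (a * σ (of x))
  | negW (a : M) (x : X) : LStep σ (a * σ (of x)) (Sum.inr x) a

inductive LPath (σ : FreeMonoid X →* M) : M → List (X ⊕ X) → M → Prop
  | nil (a : M) : LPath σ a [] a
  | cons {a b c : M} {l : X ⊕ X} {w : List (X ⊕ X)}
      (h₁ : LStep σ a l b) (h₂ : LPath σ b w c) : LPath σ a (l :: w) c

def LoopProblem (σ : FreeMonoid X →* M) : Set (List (X ⊕ X)) := { w | LPath σ 1 w 1 }

end LoopPrelude

section SemiPrelude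

variable {X S : Type*} [Semigroup S]

def SLoopProblem (f : X → S) : Set (List (X ⊕ X)) :=
  LoopProblem (FreeMonoid.lift (fun x => (f x : WithOne S)))

end SemiPrelude

/-! If `M` is finite, the loop automaton is a finite NFA, so `L_σ(M)` is regular. Conversely,
reading `u` forwards and `v` backwards is a loop exactly when `σ u = σ v`, so the left quotient of
`L_σ(M)` by the positive word `u` determines `σ u`; by surjectivity of `σ` and Myhill–Nerode, `M`
embeds into the finite set of left quotients. -/

namespace LStep

variable {X M : Type*} [Monoid M] {σ : FreeMonoid X →* M} {a b : M} {x : X}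

theorem inl_iff : LStep σ a (Sum.inl x) b ↔ b = a * σ (of x) := by
  constructor
  · rintro ⟨⟩; rfl
  · rintro rfl; exact .posW a x

theorem inr_iff : LStep σ a (Sum.inr x) b ↔ a = b * σ (of x) := by
  constructor
  · rintro ⟨⟩; rfl
  · rintro rfl; exact .negW b x

end LStep

namespace LPath

variable {X M : Type*} [Monoid M] {σ : FreeMonoid X →* M}

theorem nil_iff {a b : M} : LPath σ a [] b ↔ a = b := by
  constructor
  · rintro ⟨⟩; rfl
  · rintro rfl; exact .nil a

theorem cons_iff {a c : M} {l : X ⊕ X} {w : List (X ⊕ X)} :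
    LPath σ a (l :: w) c ↔ ∃ b, LStep σ a l b ∧ LPath σ b w c := by
  constructor
  · rintro ⟨⟩; exact ⟨_, ‹_›, ‹_›⟩
  · rintro ⟨b, h₁, h₂⟩; exact .cons h₁ h₂

theorem append_iff {a c : M} {w₁ w₂ : List (X ⊕ X)} :
    LPath σ a (w₁ ++ w₂) c ↔ ∃ b, LPath σ a w₁ b ∧ LPath σ b w₂ c := by
  induction w₁ generalizing a with
  | nil => simp [nil_iff]
  | cons l w ih => simp only [List.cons_append, cons_iff, ih]; grind

theorem posW_iff {a b : M} {u : List X} : LPath σ a (posW u) b ↔ b = a * σ (ofList u) := by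
  induction u generalizing a with
  | nil => simp [posW, nil_iff, eq_comm]
  | cons x u ih =>
    simp only [posW, List.map_cons, cons_iff, LStep.inl_iff] at ih ⊢
    simp [ih, ofList_cons, mul_assoc]

theorem negW_iff {a b : M} {v : List X} : LPath σ a (negW v) b ↔ a = b * σ (ofList v) := by
  induction v generalizing b with
  | nil => simp [negW, nil_iff]
  | cons x v ih =>
    have hsnoc : negW (x :: v) = negW v ++ [Sum.inr x] := by simp [negW]
    simp [hsnoc, append_iff, cons_iff, nil_iff, LStep.inr_iff, ih, ofList_cons, mul_assoc]

end LPath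

theorem NFA.isRegular_accepts {α σ : Type*} [Finite σ] (N : NFA α σ) : N.accepts.IsRegular := by
  classical
  have := Fintype.ofFinite σ
  exact Language.isRegular_iff.mpr ⟨Set σ, inferInstance, N.toDFA, N.toDFA_correct⟩

section LoopNFA

variable {X M : Type*} [Monoid M]

def loopNFA (σ : FreeMonoid X →* M) : NFA (X ⊕ X) M where
  step a l := {b | LStep σ a l b}
  start := {1}
  accept := {1}

theorem loopNFA_nonempty_path_iff {σ : FreeMonoid X →* M} {a b : M} {w : List (X ⊕ X)} :
    Nonempty ((loopNFA σ).Path a b w) ↔ LPath σ a w b := by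
  constructor
  · rintro ⟨p⟩
    induction p with
    | nil a => exact .nil a
    | cons _ _ _ _ _ h _ ih => exact .cons h ih
  · intro h
    induction h with
    | nil a => exact ⟨.nil a⟩
    | cons h _ ih => exact ⟨.cons _ _ _ _ _ h ih.some⟩

theorem loopNFA_accepts (σ : FreeMonoid X →* M) : (loopNFA σ).accepts = LoopProblem σ := by
  ext w
  simp only [NFA.accepts_iff_exists_path, loopNFA_nonempty_path_iff]
  simp [loopNFA]
  rfl

end LoopNFA

namespace LoopProblem

variable {X M : Type*} [Monoid M] {σ : FreeMonoid X →* M}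

theorem isRegular (σ : FreeMonoid X →* M) [Finite M] :
    Language.IsRegular (LoopProblem σ : Language (X ⊕ X)) :=
  loopNFA_accepts σ ▸ (loopNFA σ).isRegular_accepts

theorem posW_append_negW_mem_iff {u v : List X} :
    posW u ++ negW v ∈ LoopProblem σ ↔ σ (ofList u) = σ (ofList v) := by
  simp [LoopProblem, LPath.append_iff, LPath.posW_iff, LPath.negW_iff]

theorem eq_of_leftQuotient_posW_eq {u v : List X}
    (h : Language.leftQuotient (LoopProblem σ) (posW u) =
      Language.leftQuotient (LoopProblem σ) (posW v)) :
    σ (ofList u) = σ (ofList v) := by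
  have hu : negW u ∈ Language.leftQuotient (LoopProblem σ) (posW u) :=
    posW_append_negW_mem_iff.mpr rfl
  rw [h] at hu
  exact (posW_append_negW_mem_iff.mp hu).symm

theorem finite_of_isRegular (hσ : Function.Surjective σ)
    (h : Language.IsRegular (LoopProblem σ : Language (X ⊕ X))) : Finite M := by
  have := h.finite_range_leftQuotient.to_subtype
  let rep (m : M) : List X := toList (Function.surjInv hσ m)
  refine Finite.of_injective
    (fun m => (⟨_, Set.mem_range_self (posW (rep m))⟩ :
      Set.range (Language.leftQuotient (LoopProblem σ)))) fun m m' hm => ?_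
  simpa [rep, Function.surjInv_eq hσ] using eq_of_leftQuotient_posW_eq (congrArg Subtype.val hm)

end LoopProblem

theorem finite_iff_loop_problem_regular_general {X M : Type*} [Monoid M]
    (σ : FreeMonoid X →* M) (hσ : Function.Surjective σ) :
    Finite M ↔ Language.IsRegular (LoopProblem σ : Language (X ⊕ X)) :=
  ⟨fun _ => LoopProblem.isRegular σ, LoopProblem.finite_of_isRegular hσ⟩

theorem finite_iff_loop_problem_regular {X M : Type*} [Finite X] [Monoid M]
    (σ : FreeMonoid X →* M) (hσ : Function.Surjective σ) :
    Finite M ↔ Language.IsRegular (LoopProblem σ : Language (X ⊕ X)) :=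
  finite_iff_loop_problem_regular_general σ hσ
end

section
/- Every loop problem of a right cancellative monoid is deletion-closed: if w ∈ L_σ(M) and xwy ∈ L_σ(M), then xy ∈ L_σ(M). -/
open FreeMonoid

section Aux

variable {X M : Type*} [Monoid M]

theorem LStep.det [IsRightCancelMul M] {σ : FreeMonoid X →* M} {a l b b'}
    (h : LStep σ a l b) (h' : LStep σ a l b') : b = b' := by
  cases h with
  | posW a x => cases h'; rfl
  | negW b x =>
    generalize hA : b * σ (of x) = A at h'
    cases h' with
    | negW b' x' => exact (mul_right_cancel hA.symm).symm

theorem LPath.det [IsRightCancelMul M] {σ : FreeMonoid X →* M} {a w b b'}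
    (h : LPath σ a w b) (h' : LPath σ a w b') : b = b' := by
  induction h generalizing b' with
  | nil a => cases h'; rfl
  | cons h₁ h₂ ih =>
    cases h' with
    | cons h₁' h₂' => exact ih (h₁.det h₁' ▸ h₂')

theorem LStep.mul_left {σ : FreeMonoid X →* M} {a l b} (c : M)
    (h : LStep σ a l b) : LStep σ (c * a) l (c * b) := by
  cases h with
  | posW a x => rw [← mul_assoc]; exact .posW _ x
  | negW b x => rw [← mul_assoc]; exact .negW _ x

theorem LPath.mul_left {σ : FreeMonoid X →* M} {a w b} (c : M)
    (h : LPath σ a w b) : LPath σ (c * a) w (c * b) := by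
  induction h with
  | nil a => exact .nil _
  | cons h₁ _ ih => exact .cons (h₁.mul_left c) ih

theorem LPath.append {σ : FreeMonoid X →* M} {a u b v c}
    (h : LPath σ a u b) (h' : LPath σ b v c) : LPath σ a (u ++ v) c := by
  induction h with
  | nil a => exact h'
  | cons h₁ _ ih => exact .cons h₁ (ih h')

theorem LPath.split {σ : FreeMonoid X →* M} {a c} {u v : List (X ⊕ X)}
    (h : LPath σ a (u ++ v) c) : ∃ b, LPath σ a u b ∧ LPath σ b v c := by
  induction u generalizing a with
  | nil => exact ⟨a, .nil a, h⟩
  | cons l u ih =>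
    cases h with
    | cons h₁ h₂ =>
      obtain ⟨b, hb1, hb2⟩ := ih h₂
      exact ⟨b, .cons h₁ hb1, hb2⟩

end Aux

theorem loop_problem_deletion_closed {X M : Type*} [Monoid M] [IsRightCancelMul M]
    (σ : FreeMonoid X →* M) (hσ : Function.Surjective σ) :
    ∀ x y w : List (X ⊕ X), w ∈ LoopProblem σ → x ++ w ++ y ∈ LoopProblem σ →
      x ++ y ∈ LoopProblem σ := by
  intro x y w hw hxwy
  have hw' : LPath σ 1 w 1 := hw
  have hxwy' : LPath σ 1 (x ++ w ++ y) 1 := hxwy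
  obtain ⟨b, hxw, hy⟩ := LPath.split hxwy'
  obtain ⟨c, hx, hwpath⟩ := LPath.split hxw
  have hcw : LPath σ c w c := by simpa using hw'.mul_left c
  have hbc : b = c := hwpath.det hcw
  exact hx.append (hbc ▸ hy)
end
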